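/- Under the null hypothesis with V = Σ + τ_0* B Bᵀ symmetric positive definite, let λ_1, …, λ_{k_1} be the eigenvalues of Zᵀ V^{-1} Z / n. Then the probability under Y ~ N(0, V) that the score is nonnegative equals the probability that a weighted chi-square variable exceeds its mean: P(S(Y) ≥ 0) = P(Σ_{ℓ=1}^{k_1} λ_ℓ x_ℓ² ≥ Σ_{ℓ=1}^{k_1} λ_ℓ), where x_1, …, x_{k_1} are i.i.d. standard normal. (The quantity α appearing in the null distribution of the p-value.) -/

import Mathlib

open MeasureTheory Matrix ProbabilityTheory Filter
open scoped Classical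

/-- The standard multivariate Gaussian measure `N(0, I_N)` on `ℝ^N`:
the product of `N` i.i.d. standard real Gaussians. -/
noncomputable def stdGaussian (N : ℕ) : Measure (Fin N → ℝ) :=
  Measure.pi fun _ => gaussianReal 0 1

/-- The multivariate Gaussian measure `N(0, V)` on `ℝ^N` for a positive semidefinite
covariance matrix `V`: the pushforward of `N(0, I_N)` under the (unique symmetric psd)
square root of `V`.  (Junk value `0` if `V` is not psd.) -/
noncomputable def gaussian {N : ℕ} (V : Matrix (Fin N) (Fin N) ℝ) : Measure (Fin N → ℝ) :=
  if h : V.PosSemidef then (stdGaussian N).map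
    ((h.1.eigenvectorUnitary : Matrix (Fin N) (Fin N) ℝ) * diagonal (Real.sqrt ∘ h.1.eigenvalues) *
      (star h.1.eigenvectorUnitary : Matrix (Fin N) (Fin N) ℝ)).mulVec else 0

/-!
Put `M = Zᵀ V⁻¹ Z / n` and `P = n^{-1/2} Zᵀ V⁻¹`. The score is nonnegative exactly when
`tr M ≤ ‖P y‖²`, and for `Y ~ N(0, V)` the vector `P Y` is `N(0, P V Pᵀ) = N(0, M)`.
Diagonalising `M = U Λ Uᵀ`, `N(0, M)` is the law of `U √Λ x` with `x ~ N(0, I)`, whose squared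
norm is `∑ λ_ℓ x_ℓ²`, while `tr M = ∑ λ_ℓ`.
The Gaussian laws are identified through characteristic functions: the law of `A x` for
`x ~ N(0, I)` depends on `A` only through `A Aᵀ`.
-/

section
variable {E E' F : Type*}
  [NormedAddCommGroup E] [InnerProductSpace ℝ E] [CompleteSpace E] [MeasurableSpace E]
  [BorelSpace E]
  [NormedAddCommGroup E'] [InnerProductSpace ℝ E'] [CompleteSpace E'] [MeasurableSpace E']
  [BorelSpace E']
  [NormedAddCommGroup F] [InnerProductSpace ℝ F] [CompleteSpace F] [MeasurableSpace F]
  [BorelSpace F]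

lemma charFun_map_continuousLinearMap (μ : Measure E) (L : E →L[ℝ] F) (t : F) :
    charFun (μ.map L) t = charFun μ (L.adjoint t) := by
  rw [charFun_apply, charFun_apply, integral_map L.continuous.aemeasurable (by fun_prop)]
  simp_rw [L.adjoint_inner_right]

lemma stdGaussian_map_eq_of_comp_adjoint_eq [FiniteDimensional ℝ E] [FiniteDimensional ℝ E']
    [SecondCountableTopology F] (L : E →L[ℝ] F) (L' : E' →L[ℝ] F)
    (h : L ∘L L.adjoint = L' ∘L L'.adjoint) :
    (ProbabilityTheory.stdGaussian E).map L = (ProbabilityTheory.stdGaussian E').map L' := by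
  refine Measure.ext_of_charFun (funext fun t => ?_)
  simp only [charFun_map_continuousLinearMap, charFun_stdGaussian, ← Complex.ofReal_pow,
    ContinuousLinearMap.apply_norm_sq_eq_inner_adjoint_left, ContinuousLinearMap.adjoint_adjoint, h]

end

lemma stdGaussian_eq_map_ofLp (m : ℕ) :
    stdGaussian m =
      (ProbabilityTheory.stdGaussian (EuclideanSpace ℝ (Fin m))).map WithLp.ofLp := by
  rw [← map_pi_eq_stdGaussian, Measure.map_map (by fun_prop) (by fun_prop)]
  simp [Function.comp_def, _root_.stdGaussian]

lemma stdGaussian_map_mulVec_eq {m m' k : ℕ} {A : Matrix (Fin k) (Fin m) ℝ}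
    {A' : Matrix (Fin k) (Fin m') ℝ} (h : A * Aᵀ = A' * A'ᵀ) :
    (stdGaussian m).map A.mulVec = (stdGaussian m').map A'.mulVec := by
  have euclidean : ∀ {m} (A : Matrix (Fin k) (Fin m) ℝ), (stdGaussian m).map A.mulVec =
      ((ProbabilityTheory.stdGaussian (EuclideanSpace ℝ (Fin m))).map
        (toEuclideanLin A).toContinuousLinearMap).map WithLp.ofLp := by
    intro m A
    rw [stdGaussian_eq_map_ofLp, Measure.map_map (by fun_prop) (by fun_prop),
      Measure.map_map (by fun_prop) (by fun_prop)]
    rfl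
  rw [euclidean, euclidean]
  congr 1
  refine stdGaussian_map_eq_of_comp_adjoint_eq _ _ ?_
  rw [← LinearMap.adjoint_toContinuousLinearMap, ← LinearMap.adjoint_toContinuousLinearMap,
    ← toEuclideanLin_conjTranspose_eq_adjoint, ← toEuclideanLin_conjTranspose_eq_adjoint]
  ext t i
  simp [mulVec_mulVec, conjTranspose_eq_transpose_of_trivial, h]

lemma Matrix.PosSemidef.cfc_sqrt_mul_transpose {N : ℕ} {V : Matrix (Fin N) (Fin N) ℝ}
    (hV : V.PosSemidef) : cfc Real.sqrt V * (cfc Real.sqrt V)ᵀ = V := by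
  have hV_sa : IsSelfAdjoint V := hV.1
  rw [← conjTranspose_eq_transpose_of_trivial, ← star_eq_conjTranspose, ← cfc_star,
    ← cfc_mul Real.sqrt _ V]
  conv_rhs => rw [← cfc_id' ℝ V]
  exact cfc_congr fun x hx =>
    Real.mul_self_sqrt ((posSemidef_iff_isHermitian_and_spectrum_nonneg.mp hV).2 hx)

lemma gaussian_eq_map_cfc_sqrt {N : ℕ} {V : Matrix (Fin N) (Fin N) ℝ} (hV : V.PosSemidef) :
    gaussian V = (stdGaussian N).map (cfc Real.sqrt V).mulVec := by
  rw [gaussian, dif_pos hV, hV.1.cfc_eq, IsHermitian.cfc, Unitary.conjStarAlgAut_apply,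
    RCLike.ofReal_real_eq_id]
  rfl

lemma gaussian_mul_transpose {N m : ℕ} (A : Matrix (Fin N) (Fin m) ℝ) :
    gaussian (A * Aᵀ) = (stdGaussian m).map A.mulVec := by
  have hV : (A * Aᵀ).PosSemidef := by
    simpa [conjTranspose_eq_transpose_of_trivial] using posSemidef_self_mul_conjTranspose A
  rw [gaussian_eq_map_cfc_sqrt hV, stdGaussian_map_mulVec_eq hV.cfc_sqrt_mul_transpose]

lemma gaussian_map_mulVec {N k : ℕ} {V : Matrix (Fin N) (Fin N) ℝ} (hV : V.PosSemidef)
    (P : Matrix (Fin k) (Fin N) ℝ) : (gaussian V).map P.mulVec = gaussian (P * V * Pᵀ) := by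
  obtain ⟨R, rfl⟩ : ∃ R, R * Rᵀ = V := ⟨_, hV.cfc_sqrt_mul_transpose⟩
  rw [gaussian_mul_transpose, Measure.map_map (by fun_prop) (by fun_prop),
    show P * (R * Rᵀ) * Pᵀ = P * R * (P * R)ᵀ by simp [Matrix.mul_assoc], gaussian_mul_transpose]
  congr 1
  funext x
  exact mulVec_mulVec x P R

lemma Matrix.dotProduct_mulVec_mulVec_self {l m R : Type*} [Fintype l] [Fintype m]
    [CommSemiring R] (A : Matrix l m R) (x : m → R) :
    A *ᵥ x ⬝ᵥ A *ᵥ x = x ⬝ᵥ (Aᵀ * A) *ᵥ x := by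
  rw [dotProduct_mulVec, ← vecMul_transpose, vecMul_vecMul, ← dotProduct_mulVec]

namespace Matrix.PosDef

variable {N k : ℕ} {V : Matrix (Fin N) (Fin N) ℝ}

lemma inv_transpose (hV : V.PosDef) : V⁻¹ᵀ = V⁻¹ := by
  rw [← conjTranspose_eq_transpose_of_trivial, hV.inv.1.eq]

lemma mul_inv_mul_mul_transpose (hV : V.PosDef) (Z : Matrix (Fin N) (Fin k) ℝ) :
    Zᵀ * V⁻¹ * V * (Zᵀ * V⁻¹)ᵀ = Zᵀ * V⁻¹ * Z := by
  rw [transpose_mul, transpose_transpose, hV.inv_transpose, Matrix.mul_assoc (Zᵀ * V⁻¹),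
    ← Matrix.mul_assoc V, mul_nonsing_inv V ((isUnit_iff_isUnit_det V).mp hV.isUnit),
    Matrix.one_mul]

lemma transpose_mul_inv_mul_mul_inv (hV : V.PosDef) (Z : Matrix (Fin N) (Fin k) ℝ) :
    (Zᵀ * V⁻¹)ᵀ * (Zᵀ * V⁻¹) = V⁻¹ * Z * Zᵀ * V⁻¹ := by
  simp only [transpose_mul, transpose_transpose, hV.inv_transpose, Matrix.mul_assoc]

end Matrix.PosDef

namespace Matrix.PosSemidef

variable {n : Type*} [Fintype n] [DecidableEq n] {M : Matrix n n ℝ} (hM : M.PosSemidef)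

noncomputable def eigenFactor : Matrix n n ℝ :=
  (hM.1.eigenvectorUnitary : Matrix n n ℝ) * diagonal (Real.sqrt ∘ hM.1.eigenvalues)

lemma eigenFactor_mul_transpose : hM.eigenFactor * hM.eigenFactorᵀ = M := by
  conv_rhs => rw [hM.1.spectral_theorem, Unitary.conjStarAlgAut_apply]
  rw [eigenFactor, transpose_mul, diagonal_transpose, Matrix.mul_assoc,
    ← Matrix.mul_assoc (diagonal _), diagonal_mul_diagonal, ← Matrix.mul_assoc,
    star_eq_conjTranspose, conjTranspose_eq_transpose_of_trivial]
  congr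
  funext i
  simp [Real.mul_self_sqrt (hM.eigenvalues_nonneg i)]

lemma dotProduct_eigenFactor_mulVec (x : n → ℝ) :
    hM.eigenFactor *ᵥ x ⬝ᵥ hM.eigenFactor *ᵥ x = ∑ i, hM.1.eigenvalues i * x i ^ 2 := by
  have hU : (hM.1.eigenvectorUnitary : Matrix n n ℝ)ᵀ * hM.1.eigenvectorUnitary = 1 := by
    rw [← conjTranspose_eq_transpose_of_trivial, ← star_eq_conjTranspose]
    exact Unitary.coe_star_mul_self _
  rw [eigenFactor, ← mulVec_mulVec, dotProduct_mulVec_mulVec_self, hU, one_mulVec]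
  refine Finset.sum_congr rfl fun i _ => ?_
  simp only [mulVec_diagonal, Function.comp_apply]
  rw [mul_mul_mul_comm, Real.mul_self_sqrt (hM.eigenvalues_nonneg i), sq]

end Matrix.PosSemidef

lemma Matrix.PosSemidef.gaussian_setOf_le_dotProduct_self {k : ℕ}
    {M : Matrix (Fin k) (Fin k) ℝ} (hM : M.PosSemidef) (c : ℝ) :
    gaussian M {z | c ≤ z ⬝ᵥ z} = stdGaussian k {x | c ≤ ∑ i, hM.1.eigenvalues i * x i ^ 2} := by
  conv_lhs => rw [← hM.eigenFactor_mul_transpose]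
  rw [gaussian_mul_transpose,
    Measure.map_apply (by fun_prop) (measurableSet_le (by fun_prop) (by fun_prop))]
  simp only [Set.preimage_ofPred_eq, hM.dotProduct_eigenFactor_mulVec]

theorem stmt5_general (n k1 N : ℕ) (hn : 0 < n)
    (Z : Matrix (Fin N) (Fin k1) ℝ)
    (V : Matrix (Fin N) (Fin N) ℝ) (hV : V.PosDef)
    (hM : ((n : ℝ)⁻¹ • (Zᵀ * V⁻¹ * Z)).IsHermitian)
    (S : (Fin N → ℝ) → ℝ)
    (hS : ∀ y, S y = -(1 / 2) * ((Zᵀ * V⁻¹ * Z).trace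
      - y ⬝ᵥ (V⁻¹ * Z * Zᵀ * V⁻¹).mulVec y)) :
    gaussian V {y | 0 ≤ S y} =
      stdGaussian k1 {x | ∑ ℓ, hM.eigenvalues ℓ ≤ ∑ ℓ, hM.eigenvalues ℓ * x ℓ ^ 2} := by
  set M := (n : ℝ)⁻¹ • (Zᵀ * V⁻¹ * Z)
  have hn' : (0 : ℝ) < n := Nat.cast_pos.mpr hn
  have hsqrt : (Real.sqrt n)⁻¹ * (Real.sqrt n)⁻¹ = (n : ℝ)⁻¹ := by
    rw [← mul_inv, Real.mul_self_sqrt hn'.le]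
  set P := (Real.sqrt n)⁻¹ • (Zᵀ * V⁻¹)
  have hPVP : P * V * Pᵀ = M := by
    simp only [P, transpose_smul, Matrix.smul_mul, Matrix.mul_smul, smul_smul, hsqrt,
      hV.mul_inv_mul_mul_transpose, M]
  have hPP : Pᵀ * P = (n : ℝ)⁻¹ • (V⁻¹ * Z * Zᵀ * V⁻¹) := by
    simp only [P, transpose_smul, Matrix.smul_mul, Matrix.mul_smul, smul_smul, hsqrt,
      hV.transpose_mul_inv_mul_mul_inv]
  have hMpsd : M.PosSemidef := by
    simpa [conjTranspose_eq_transpose_of_trivial] using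
      (hV.inv.posSemidef.conjTranspose_mul_mul_same Z).smul (inv_nonneg.2 hn'.le)
  have hevent : {y | 0 ≤ S y} = P.mulVec ⁻¹' {z | M.trace ≤ z ⬝ᵥ z} := by
    ext y
    simp only [Set.mem_preimage, Set.mem_ofPred_eq, hS, dotProduct_mulVec_mulVec_self, hPP,
      smul_mulVec, dotProduct_smul, M, trace_smul, smul_eq_mul]
    rw [mul_le_mul_iff_right₀ (inv_pos.2 hn')]
    constructor <;> intro h <;> linarith
  have htrace : M.trace = ∑ ℓ, hM.eigenvalues ℓ := by
    simpa using hM.trace_eq_sum_eigenvalues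
  rw [hevent, ← Measure.map_apply (by fun_prop) (measurableSet_le (by fun_prop) (by fun_prop)),
    gaussian_map_mulVec hV.posSemidef, hPVP, hMpsd.gaussian_setOf_le_dotProduct_self, htrace]

/-- Under the null with `V = Sg + τ₀* B Bᵀ` positive definite, the probability under
`Y ~ N(0, V)` that the score is nonnegative equals the probability that the weighted
chi-square `∑ λ_ℓ x_ℓ²` exceeds its mean `∑ λ_ℓ`, where `λ_ℓ` are the eigenvalues of
`Zᵀ V⁻¹ Z / n` and `x ~ N(0, I_{k₁})`. -/
theorem stmt5 (n k0 k1 N : ℕ) (hn : 0 < n) (hk0 : 0 < k0) (hk1 : 0 < k1) (hN : 0 < N)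
    (B : Matrix (Fin N) (Fin k0) ℝ) (Z : Matrix (Fin N) (Fin k1) ℝ)
    (Sg : Matrix (Fin N) (Fin N) ℝ) (hSg : Sg.PosDef)
    (τ0 : ℝ) (hτ0 : 0 ≤ τ0)
    (V : Matrix (Fin N) (Fin N) ℝ) (hVdef : V = Sg + τ0 • (B * Bᵀ)) (hV : V.PosDef)
    (hM : ((n : ℝ)⁻¹ • (Zᵀ * V⁻¹ * Z)).IsHermitian)
    (S : (Fin N → ℝ) → ℝ)
    (hS : ∀ y, S y = -(1 / 2) * ((Zᵀ * V⁻¹ * Z).trace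
      - y ⬝ᵥ (V⁻¹ * Z * Zᵀ * V⁻¹).mulVec y)) :
    gaussian V {y | 0 ≤ S y} =
      stdGaussian k1 {x | ∑ ℓ, hM.eigenvalues ℓ ≤ ∑ ℓ, hM.eigenvalues ℓ * x ℓ ^ 2} :=
  stmt5_general n k1 N hn Z V hV hM S hS
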